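/- Let f : X → X be a non-expansive bijection and n ∈ ℕ. Then neither f⁻¹(a′ n) nor f⁻¹(b′ n) is a condensation point of X. -/
import Mathlib


def IsCondensationPoint (X : Set ℝ) (x : ℝ) : Prop :=
  ∀ U : Set ℝ, IsOpen U → x ∈ U → Cardinal.aleph 1 ≤ Cardinal.mk ↥(X ∩ U)

theorem stmt12
    (a b : ℕ → ℝ)
    (hlt : ∀ n, a n < b n)
    (haq : ∀ n, ∃ q : ℚ, (q : ℝ) = a n)
    (hbq : ∀ n, ∃ q : ℚ, (q : ℝ) = b n)
    (hdisj : ∀ i j, i ≠ j → Disjoint (Set.Icc (a i) (b i)) (Set.Icc (a j) (b j)))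
    (hhalf : ∀ n, 2 * (b (n + 1) - a (n + 1)) < b n - a n)
    (hgap : ∀ i j, b i < a j → a j - b i > b 0 - a 0)
    (h01 : a 0 < a 1)
    (hcof : ∀ x : ℝ, ∃ k l, b k < x ∧ x < a l)
    (m : ℕ → ℕ)
    (hm : ∀ n, b n < a (m n))
    (hmgap : ∀ n, Disjoint (Set.Ioo (b n) (a (m n))) (⋃ k, Set.Icc (a k) (b k)))
    (A : ℕ → Set ℝ)
    (hA : ∀ n, A n ⊆ Set.Ioo (b n) (a (m n)))
    (hAcard : ∀ n, ∀ U : Set ℝ, IsOpen U → U.Nonempty → U ⊆ Set.Ioo (b n) (a (m n)) →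
      Cardinal.mk ↥(A n ∩ U) = Cardinal.aleph 1)
    (X : Set ℝ)
    (hX : X = ⋃ n, (({x : ℝ | ∃ q : ℚ, (q : ℝ) = x} ∩ Set.Icc (a n) (b n)) ∪ A n))
    (f : ℝ → ℝ)
    (hbij : Set.BijOn f X X)
    (hne : ∀ x ∈ X, ∀ y ∈ X, |f x - f y| ≤ |x - y|)
    (g : ℝ → ℝ)
    (hg : Set.InvOn g f X X)
    (n : ℕ) :
    ¬ IsCondensationPoint X (g (a n + (b (n + 1) - a (n + 1)))) ∧
    ¬ IsCondensationPoint X (g (b n - (b (n + 1) - a (n + 1)))) := by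
  have hd0 : 0 < b (n+1) - a (n+1) := sub_pos.mpr (hlt (n+1))
  have hdlt : b (n+1) - a (n+1) < b n - a n := by have := hhalf n; linarith
  -- X ∩ Ioo (a n) (b n) is countable
  have hcount : (X ∩ Set.Ioo (a n) (b n)).Countable := by
    have hsub : X ∩ Set.Ioo (a n) (b n) ⊆ Set.range ((↑) : ℚ → ℝ) := by
      rintro y ⟨hyX, hyI⟩
      rw [hX] at hyX
      obtain ⟨s, ⟨j, rfl⟩, hys⟩ := hyX
      rcases hys with ⟨⟨q, hq⟩, _⟩ | hyA
      · exact ⟨q, hq⟩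
      · exact (Set.disjoint_left.mp (hmgap j) (hA j hyA)
          (Set.mem_iUnion.mpr ⟨n, Set.Ioo_subset_Icc_self hyI⟩)).elim
    exact (Set.countable_range _).mono hsub
  have hsmall : Cardinal.mk ↥(X ∩ Set.Ioo (a n) (b n)) < Cardinal.aleph 1 := by
    have h1 : Cardinal.mk ↥(X ∩ Set.Ioo (a n) (b n)) ≤ Cardinal.aleph0 := by
      have := hcount.to_subtype; exact Cardinal.mk_le_aleph0
    exact lt_of_le_of_lt h1 Cardinal.aleph0_lt_aleph_one
  have hnotc : ∀ c ∈ Set.Ioo (a n) (b n), ¬ IsCondensationPoint X c := by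
    intro c hc hcond
    exact absurd (hcond _ isOpen_Ioo hc) (not_le.mpr hsmall)
  -- transfer under f
  have htrans : ∀ x ∈ X, IsCondensationPoint X x → IsCondensationPoint X (f x) := by
    intro x hx hcond U hU hfU
    obtain ⟨ε, hε, hball⟩ := Metric.isOpen_iff.mp hU _ hfU
    refine le_trans (hcond (Metric.ball x ε) Metric.isOpen_ball (Metric.mem_ball_self hε)) ?_
    have hmem : ∀ y : ↥(X ∩ Metric.ball x ε), f y ∈ X ∩ U := by
      rintro ⟨y, hyX, hyb⟩
      refine ⟨hbij.mapsTo hyX, hball ?_⟩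
      have h2 := hne y hyX x hx
      rw [Metric.mem_ball, Real.dist_eq]
      calc |f y - f x| ≤ |y - x| := h2
        _ < ε := by rw [← Real.dist_eq]; exact hyb
    exact Cardinal.mk_le_of_injective (f := fun y => (⟨f y, hmem y⟩ : ↥(X ∩ U)))
      (fun y z h => Subtype.ext (hbij.injOn y.2.1 z.2.1 (congrArg Subtype.val h)))
  obtain ⟨qa, hqa⟩ := haq n
  obtain ⟨qb, hqb⟩ := hbq n
  obtain ⟨qa1, hqa1⟩ := haq (n+1)
  obtain ⟨qb1, hqb1⟩ := hbq (n+1)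
  have key : ∀ c : ℝ, c ∈ Set.Ioo (a n) (b n) → (∃ q : ℚ, (q : ℝ) = c) →
      ¬ IsCondensationPoint X (g c) := by
    intro c hc hq hcond
    have hcX : c ∈ X := by
      rw [hX]
      exact Set.mem_iUnion.mpr ⟨n, Or.inl ⟨hq, Set.Ioo_subset_Icc_self hc⟩⟩
    obtain ⟨y, hy, hyf⟩ := hbij.surjOn hcX
    have hgy : g c = y := by rw [← hyf]; exact hg.1 hy
    rw [hgy] at hcond
    have := htrans y hy hcond
    rw [hyf] at this
    exact hnotc c hc this
  constructor
  · refine key _ ⟨by linarith, by linarith⟩ ⟨qa + (qb1 - qa1), by push_cast; rw [hqa, hqa1, hqb1]⟩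
  · refine key _ ⟨by linarith, by linarith⟩ ⟨qb - (qb1 - qa1), by push_cast; rw [hqb, hqa1, hqb1]⟩
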